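/- arXiv:2103.09571 — 3 statements merged into one kernel-verified Lean document; each statement's English description precedes it below -/
import Mathlib

section
/- Let n ≥ 1 and D : Fin n → Fin n → Fin n → ℂ with D^j_{ik} := D j i k. Suppose D satisfies the Salamon triangularity condition: D^j_{ik} = 0 unless i > j (indices compared as natural numbers, with indices 1,…,n). Suppose further that for every i, Σ_r |D^r_{ii}|² − Σ_r |D^i_{ri}|² = c for a fixed real constant c. Then c = 0. -/
open Complex Finset

theorem stmt2 (n : ℕ) (hn : 1 ≤ n) (D : Fin n → Fin n → Fin n → ℂ) (c : ℝ)
    (hSalamon : ∀ i j k : Fin n, ¬ (j < i) → D j i k = 0)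
    (hH : ∀ i : Fin n, (∑ r, Complex.normSq (D r i i))
      - (∑ r, Complex.normSq (D i r i)) = c) :
    c = 0 := by
  have h0 : (0 : ℕ) < n := hn
  set z : Fin n := ⟨0, h0⟩
  set m : Fin n := ⟨n - 1, by omega⟩
  have hc1 : c ≤ 0 := by
    have h := hH z
    have hz : ∀ r : Fin n, D r z z = 0 := fun r =>
      hSalamon z r z (by simp [z, Fin.lt_def])
    rw [show (∑ r, Complex.normSq (D r z z)) = 0 by
      apply Finset.sum_eq_zero; intro r _; rw [hz r]; simp] at h
    have : (0:ℝ) ≤ ∑ r, Complex.normSq (D z r z) :=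
      Finset.sum_nonneg fun r _ => Complex.normSq_nonneg _
    linarith
  have hc2 : 0 ≤ c := by
    have h := hH m
    have hm : ∀ r : Fin n, D m r m = 0 := fun r =>
      hSalamon r m m (by simp [m, Fin.lt_def]; omega)
    rw [show (∑ r, Complex.normSq (D m r m)) = 0 by
      apply Finset.sum_eq_zero; intro r _; rw [hm r]; simp] at h
    have : (0:ℝ) ≤ ∑ r, Complex.normSq (D r m m) :=
      Finset.sum_nonneg fun r _ => Complex.normSq_nonneg _
    linarith
  linarith
end

section
/- Let n ≥ 1 and D : Fin n → Fin n → Fin n → ℂ with D^j_{ik} := D j i k satisfying the Salamon triangularity D^j_{ik} = 0 unless i > j. Suppose that for every pair i < k the identity Σ_r |D^r_{ki} + D^r_{ik}|² = Σ_r ( |D^k_{ri}|² + |D^i_{rk}|² + 2·Re( D^k_{rk}·conj(D^i_{ri}) + D^i_{rk}·conj(D^i_{kr}) ) ) holds, and that Σ_r |D^r_{ii}|² = Σ_r |D^i_{ri}|² for every i. Then D^j_{ik} = 0 for all i, j, k. -/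
open Complex Finset

theorem stmt6 (n : ℕ) (hn : 1 ≤ n) (D : Fin n → Fin n → Fin n → ℂ)
    (hSalamon : ∀ i j k : Fin n, ¬ (j < i) → D j i k = 0)
    (hRhat : ∀ i k : Fin n, i < k →
      (∑ r, Complex.normSq (D r k i + D r i k))
      = ∑ r, (Complex.normSq (D k r i) + Complex.normSq (D i r k)
          + 2 * (D k r k * (starRingEnd ℂ) (D i r i)
              + D i r k * (starRingEnd ℂ) (D i k r)).re))
    (hdiag : ∀ i : Fin n,
      (∑ r, Complex.normSq (D r i i)) = ∑ r, Complex.normSq (D i r i)) :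
    ∀ i j k : Fin n, D j i k = 0 := by
  suffices key : ∀ t : ℕ, ∀ i j k : Fin n,
      (n - t ≤ (i:ℕ) ∨ n - t ≤ (j:ℕ) ∨ n - t ≤ (k:ℕ)) → D j i k = 0 by
    intro i j k
    exact key n i j k (Or.inl (by omega))
  intro t
  induction t with
  | zero =>
    intro i j k h
    exfalso
    have hi := i.isLt; have hj := j.isLt; have hk := k.isLt
    omega
  | succ t IH =>
    by_cases ht : n ≤ t
    · intro i j k _
      exact IH i j k (Or.inl (by omega))
    · push_neg at ht
      set m : ℕ := n - t - 1 with hm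
      have hmn : m < n := by omega
      set M : Fin n := ⟨m, hmn⟩ with hM
      have hIH' : ∀ i j k : Fin n,
          (m < (i:ℕ) ∨ m < (j:ℕ) ∨ m < (k:ℕ)) → D j i k = 0 := by
        intro i j k h
        apply IH i j k
        omega
      -- Step 0 : D M _ _ = 0
      have h0 : ∀ i k : Fin n, D M i k = 0 := by
        intro i k
        by_cases h : M < i
        · exact hIH' i M k (Or.inl (Fin.lt_def.mp h))
        · exact hSalamon i M k h
      -- diagonal : D r M M = 0
      have hd : ∀ r : Fin n, D r M M = 0 := by
        have h1 := hdiag M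
        have h2 : ∑ r, Complex.normSq (D M r M) = 0 := by simp [h0]
        rw [h2] at h1
        intro r
        have h3 := (Finset.sum_eq_zero_iff_of_nonneg
          (fun x _ => Complex.normSq_nonneg _)).mp h1 r (Finset.mem_univ r)
        exact normSq_eq_zero.mp h3
      -- extended equation for all i
      have heq : ∀ i : Fin n,
          (∑ r, Complex.normSq (D r M i + D r i M))
          = ∑ r, (Complex.normSq (D i r M)
              + 2 * (D i r M * (starRingEnd ℂ) (D i M r)).re) := by
        intro i
        rcases lt_trichotomy (i:ℕ) m with h | h | h
        · have h1 := hRhat i M (Fin.lt_def.mpr h)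
          simp only [h0, Complex.normSq_zero, zero_add, zero_mul] at h1
          simpa using h1
        · have hiM : i = M := Fin.ext h
          subst hiM
          simp [hd, h0]
        · have e1 : ∀ a b : Fin n, D i a b = 0 :=
            fun a b => hIH' a i b (Or.inr (Or.inl h))
          have e2 : ∀ a b : Fin n, D a i b = 0 :=
            fun a b => hIH' i a b (Or.inl h)
          have e3 : ∀ a b : Fin n, D a b i = 0 :=
            fun a b => hIH' b a i (Or.inr (Or.inr h))
          simp [e1, e2, e3]
      -- sum the equations over i
      have hL : ∑ i : Fin n, ∑ r, Complex.normSq (D r M i + D r i M)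
          = (∑ i : Fin n, ∑ r, Complex.normSq (D r M i))
            + (∑ i : Fin n, ∑ r, Complex.normSq (D r i M))
            + 2 * ∑ i : Fin n, ∑ r, (D r M i * (starRingEnd ℂ) (D r i M)).re := by
        simp only [Complex.normSq_add, Finset.sum_add_distrib, ← Finset.mul_sum]
      have hR : ∑ i : Fin n, ∑ r, (Complex.normSq (D i r M)
              + 2 * (D i r M * (starRingEnd ℂ) (D i M r)).re)
          = (∑ i : Fin n, ∑ r, Complex.normSq (D i r M))
            + 2 * ∑ i : Fin n, ∑ r, (D i r M * (starRingEnd ℂ) (D i M r)).re := by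
        simp only [Finset.sum_add_distrib, ← Finset.mul_sum]
      have hsum : ∑ i : Fin n, ∑ r, Complex.normSq (D r M i + D r i M)
          = ∑ i : Fin n, ∑ r, (Complex.normSq (D i r M)
              + 2 * (D i r M * (starRingEnd ℂ) (D i M r)).re) :=
        Finset.sum_congr rfl fun i _ => heq i
      have claim1 : ∑ i : Fin n, ∑ r, Complex.normSq (D r i M)
          = ∑ i : Fin n, ∑ r, Complex.normSq (D i r M) := Finset.sum_comm
      have claim2 : ∑ i : Fin n, ∑ r, (D i r M * (starRingEnd ℂ) (D i M r)).re
          = ∑ i : Fin n, ∑ r, (D r M i * (starRingEnd ℂ) (D r i M)).re := by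
        rw [Finset.sum_comm]
        refine Finset.sum_congr rfl fun r _ => Finset.sum_congr rfl fun i _ => ?_
        have : D i r M * (starRingEnd ℂ) (D i M r)
            = (starRingEnd ℂ) (D i M r * (starRingEnd ℂ) (D i r M)) := by
          rw [map_mul, Complex.conj_conj]; ring
        rw [this, Complex.conj_re]
      have hzero : ∑ i : Fin n, ∑ r, Complex.normSq (D r M i) = 0 := by
        rw [hL, hR, claim1, claim2] at hsum
        linarith
      have hA : ∀ r i : Fin n, D r M i = 0 := by
        intro r i
        have h1 := (Finset.sum_eq_zero_iff_of_nonneg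
          (fun x _ => Finset.sum_nonneg fun y _ => Complex.normSq_nonneg _)).mp
          hzero i (Finset.mem_univ i)
        have h2 := (Finset.sum_eq_zero_iff_of_nonneg
          (fun x _ => Complex.normSq_nonneg _)).mp h1 r (Finset.mem_univ r)
        exact normSq_eq_zero.mp h2
      -- reduced equation
      have heqB : ∀ i : Fin n,
          ∑ r, Complex.normSq (D r i M) = ∑ r, Complex.normSq (D i r M) := by
        intro i
        have h1 := heq i
        simpa [hA] using h1
      -- rows vanish, by strong induction on the value of i
      have hrow : ∀ s : ℕ, ∀ i : Fin n, (i:ℕ) = s → ∀ r, D i r M = 0 := by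
        intro s
        induction s using Nat.strong_induction_on with
        | _ s IH2 =>
          intro i hi r
          have hcol : ∑ r, Complex.normSq (D r i M) = 0 := by
            apply Finset.sum_eq_zero
            intro x _
            by_cases hx : x < i
            · rw [IH2 (x:ℕ) (by rw [← hi]; exact Fin.lt_def.mp hx) x rfl i,
                Complex.normSq_zero]
            · rw [hSalamon i x M hx, Complex.normSq_zero]
          have h1 := heqB i
          rw [hcol] at h1
          have h2 := (Finset.sum_eq_zero_iff_of_nonneg
            (fun x _ => Complex.normSq_nonneg _)).mp h1.symm r (Finset.mem_univ r)
          exact normSq_eq_zero.mp h2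
      -- conclude the induction step
      intro i j k h
      have hnt : n - (t + 1) = m := by omega
      rw [hnt] at h
      rcases h with h | h | h
      · rcases eq_or_lt_of_le h with h' | h'
        · have : i = M := Fin.ext h'.symm
          subst this
          exact hA j k
        · exact hIH' i j k (Or.inl h')
      · rcases eq_or_lt_of_le h with h' | h'
        · have : j = M := Fin.ext h'.symm
          subst this
          exact h0 i k
        · exact hIH' i j k (Or.inr (Or.inl h'))
      · rcases eq_or_lt_of_le h with h' | h'
        · have : k = M := Fin.ext h'.symm
          subst this
          exact hrow (j:ℕ) j rfl i
        · exact hIH' i j k (Or.inr (Or.inr h'))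
end

section
/- Let n ≥ 1 and D : Fin n → Fin n → Fin n → ℂ with D^j_{ik} := D j i k satisfying D^j_{ik} = 0 unless i > j. Suppose that for every pair i < k: Σ_r |D^r_{ki} + D^r_{ik}|² = Σ_r ( |D^k_{ri}|² + |D^i_{rk}|² + 2·Re( D^k_{rk}·conj(D^i_{ri}) + D^i_{rk}·conj(D^i_{kr}) ) ), and Σ_r |D^r_{ii}|² = Σ_r |D^i_{ri}|² for every i. Define R_{i j̄ k l̄} := Σ_r ( D^r_{ki}·conj(D^r_{lj}) − D^l_{ri}·conj(D^k_{rj}) − D^j_{ri}·conj(D^k_{lr}) − conj(D^i_{rj})·D^l_{kr} ). Then R_{i j̄ k l̄} = 0 for all i, j, k, l. -/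
open Complex Finset

theorem stmt14 (n : ℕ) (hn : 1 ≤ n) (D : Fin n → Fin n → Fin n → ℂ)
    (hSalamon : ∀ i j k : Fin n, ¬ (j < i) → D j i k = 0)
    (hRhat : ∀ i k : Fin n, i < k →
      (∑ r, Complex.normSq (D r k i + D r i k))
      = ∑ r, (Complex.normSq (D k r i) + Complex.normSq (D i r k)
          + 2 * (D k r k * (starRingEnd ℂ) (D i r i)
              + D i r k * (starRingEnd ℂ) (D i k r)).re))
    (hdiag : ∀ i : Fin n,
      (∑ r, Complex.normSq (D r i i)) = ∑ r, Complex.normSq (D i r i))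
    (R : Fin n → Fin n → Fin n → Fin n → ℂ)
    (hR : ∀ i j k l, R i j k l = ∑ r, (D r k i * (starRingEnd ℂ) (D r l j)
      - D l r i * (starRingEnd ℂ) (D k r j)
      - D j r i * (starRingEnd ℂ) (D k l r)
      - (starRingEnd ℂ) (D i r j) * D l k r)) :
    ∀ i j k l : Fin n, R i j k l = 0 := by
  have key : ∀ m : ℕ, ∀ j i k : Fin n, (n ≤ i.val + m ∨ n ≤ k.val + m) → D j i k = 0 := by
    intro m
    induction m with
    | zero =>
        intro j i k h
        exfalso
        have hi := i.isLt
        have hk := k.isLt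
        omega
    | succ m IH =>
        by_cases hm : n ≤ m
        · intro j i k _
          exact IH j i k (Or.inl (by omega))
        · push_neg at hm
          obtain ⟨S, hSval⟩ : ∃ S : Fin n, S.val = n - m - 1 :=
            ⟨⟨n - m - 1, by omega⟩, rfl⟩
          have IH' : ∀ a b c : Fin n, (S.val < b.val ∨ S.val < c.val) → D a b c = 0 := by
            intro a b c h
            refine IH a b c ?_
            rcases h with h | h
            · exact Or.inl (by omega)
            · exact Or.inr (by omega)
          have hlevel : ∀ a : Fin n, S.val ≤ a.val → ∀ b c : Fin n, D a b c = 0 := by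
            intro a ha b c
            rcases Nat.lt_or_ge S.val b.val with h | h
            · exact IH' a b c (Or.inl h)
            · exact hSalamon b a c (by rw [Fin.lt_def]; omega)
          have hzS : ∀ b c : Fin n, D S b c = 0 := hlevel S le_rfl
          have hA : ∀ r : Fin n, D r S S = 0 := by
            have h := hdiag S
            simp only [hzS, Complex.normSq_zero, Finset.sum_const_zero] at h
            intro r
            have h2 := (Finset.sum_eq_zero_iff_of_nonneg
              (fun x _ => Complex.normSq_nonneg (D x S S))).mp h r (Finset.mem_univ r)
            exact Complex.normSq_eq_zero.mp h2
          have hEq : ∀ i : Fin n,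
              (∑ r, Complex.normSq (D r S i + D r i S))
                = ∑ r, (Complex.normSq (D i r S)
                    + 2 * (D i r S * (starRingEnd ℂ) (D i S r)).re) := by
            intro i
            rcases Nat.lt_trichotomy i.val S.val with hi | hi | hi
            · have h := hRhat i S (Fin.lt_def.mpr hi)
              simpa [hzS] using h
            · have hiS : i = S := Fin.ext hi
              subst hiS
              simp [hA, hzS]
            · have h1 : ∀ r : Fin n, D r S i = 0 := fun r => IH' r S i (Or.inr hi)
              have h2 : ∀ r : Fin n, D r i S = 0 := fun r => IH' r i S (Or.inl hi)
              have h3 : ∀ b c : Fin n, D i b c = 0 := hlevel i (le_of_lt hi)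
              simp [h1, h2, h3]
          have expand : ∀ i r : Fin n, Complex.normSq (D r S i + D r i S)
              = Complex.normSq (D r S i) + Complex.normSq (D r i S)
                + 2 * (D r S i * (starRingEnd ℂ) (D r i S)).re :=
            fun i r => Complex.normSq_add _ _
          have hsum2 : (∑ i : Fin n, ∑ r : Fin n, (Complex.normSq (D r S i)
                + Complex.normSq (D r i S)
                + 2 * (D r S i * (starRingEnd ℂ) (D r i S)).re))
              = ∑ i : Fin n, ∑ r : Fin n, (Complex.normSq (D i r S)
                + 2 * (D i r S * (starRingEnd ℂ) (D i S r)).re) := by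
            rw [show (∑ i : Fin n, ∑ r : Fin n, (Complex.normSq (D r S i)
                + Complex.normSq (D r i S)
                + 2 * (D r S i * (starRingEnd ℂ) (D r i S)).re))
              = ∑ i : Fin n, ∑ r : Fin n, Complex.normSq (D r S i + D r i S) from
              Finset.sum_congr rfl fun i _ => Finset.sum_congr rfl fun r _ => (expand i r).symm]
            exact Finset.sum_congr rfl fun i _ => hEq i
          have hB : (∑ i : Fin n, ∑ r : Fin n, Complex.normSq (D r i S))
              = ∑ i : Fin n, ∑ r : Fin n, Complex.normSq (D i r S) := Finset.sum_comm
          have hC : (∑ i : Fin n, ∑ r : Fin n, (D r S i * (starRingEnd ℂ) (D r i S)).re)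
              = ∑ i : Fin n, ∑ r : Fin n, (D i r S * (starRingEnd ℂ) (D i S r)).re := by
            rw [Finset.sum_comm]
            refine Finset.sum_congr rfl fun i _ => Finset.sum_congr rfl fun r _ => ?_
            simp only [Complex.mul_re, Complex.conj_re, Complex.conj_im]
            ring
          have hC2 : (∑ i : Fin n, ∑ r : Fin n, 2 * (D r S i * (starRingEnd ℂ) (D r i S)).re)
              = ∑ i : Fin n, ∑ r : Fin n, 2 * (D i r S * (starRingEnd ℂ) (D i S r)).re := by
            simp only [← Finset.mul_sum]
            rw [hC]
          simp only [Finset.sum_add_distrib] at hsum2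
          rw [hB, hC2] at hsum2
          have hA0 : (∑ i : Fin n, ∑ r : Fin n, Complex.normSq (D r S i)) = 0 := by
            linarith
          have hRow : ∀ r i : Fin n, D r S i = 0 := by
            intro r i
            have h1 := (Finset.sum_eq_zero_iff_of_nonneg
              (fun x _ => Finset.sum_nonneg fun y _ => Complex.normSq_nonneg (D y S x))).mp
              hA0 i (Finset.mem_univ i)
            have h2 := (Finset.sum_eq_zero_iff_of_nonneg
              (fun y _ => Complex.normSq_nonneg (D y S i))).mp h1 r (Finset.mem_univ r)
            exact Complex.normSq_eq_zero.mp h2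
          have hEq2 : ∀ i : Fin n, (∑ r, Complex.normSq (D r i S))
              = ∑ r, Complex.normSq (D i r S) := by
            intro i
            simpa [hRow] using hEq i
          have hCol : ∀ p : ℕ, ∀ i : Fin n, i.val ≤ p → ∀ r : Fin n, D i r S = 0 := by
            intro p
            induction p with
            | zero =>
                intro i hi r
                have hz : ∀ x : Fin n, D x i S = 0 := fun x =>
                  hSalamon i x S (by rw [Fin.lt_def]; omega)
                have h := hEq2 i
                simp only [hz, Complex.normSq_zero, Finset.sum_const_zero] at h
                have h2 := (Finset.sum_eq_zero_iff_of_nonneg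
                  (fun y _ => Complex.normSq_nonneg (D i y S))).mp h.symm r (Finset.mem_univ r)
                exact Complex.normSq_eq_zero.mp h2
            | succ p IHp =>
                intro i hi r
                have hz : ∀ x : Fin n, D x i S = 0 := by
                  intro x
                  rcases Nat.lt_or_ge x.val i.val with h | h
                  · exact IHp x (by omega) i
                  · exact hSalamon i x S (by rw [Fin.lt_def]; omega)
                have h := hEq2 i
                simp only [hz, Complex.normSq_zero, Finset.sum_const_zero] at h
                have h2 := (Finset.sum_eq_zero_iff_of_nonneg
                  (fun y _ => Complex.normSq_nonneg (D i y S))).mp h.symm r (Finset.mem_univ r)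
                exact Complex.normSq_eq_zero.mp h2
          intro j i k hik
          rcases hik with h | h
          · by_cases h' : n ≤ i.val + m
            · exact IH j i k (Or.inl h')
            · have hiv : i = S := Fin.ext (by omega)
              rw [hiv]
              exact hRow j k
          · by_cases h' : n ≤ k.val + m
            · exact IH j i k (Or.inr h')
            · have hkv : k = S := Fin.ext (by omega)
              rw [hkv]
              exact hCol j.val j le_rfl i
  have hD : ∀ j i k : Fin n, D j i k = 0 :=
    fun j i k => key n j i k (Or.inl (Nat.le_add_left n _))
  intro i j k l
  rw [hR]
  simp [hD]
end
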